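/- arXiv:2401.00838 — 3 statements merged into one kernel-verified Lean document; each statement's English description precedes it below -/
import Mathlib

section
/- For v ∈ 𝔳 the following are equivalent: (i) v satisfies the J²-condition; (ii) the subspace ker_𝔳(ad v) ∩ v^⊥ of 𝔳 is invariant under J_z for every z ∈ 𝔷; (iii) J_𝔷(ker_𝔳(ad v) ∩ v^⊥) ⊆ ker_𝔳(ad v). -/
/-!
Put `S := ℝ v + J_𝔷 v`. Since `[v, w] = 0` means `w ⊥ J_𝔷 v`, the space `ker (ad v) ∩ v^⊥` is `S^⊥`,
and skew-symmetry of the `J_z` turns condition (iii) into `J_{z₁} J_{z₂} v ∈ S^⊥⊥ = S` for all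
`z₁, z₂`. The `J²`-condition is the same statement: splitting `z₂` along `z₁` and `z₁^⊥` reduces
it to orthogonal pairs, and for those `J_{z₁} J_{z₂} v ⊥ v`, so its `ℝ v`-component vanishes.
Finally (ii) ⇔ (iii) because `J_z` maps `ker (ad v)` into `v^⊥`, again by skew-symmetry.
-/

open RealInnerProductSpace

theorem inner_map_map_of_norm_map_eq_mul {E F : Type*} [NormedAddCommGroup E]
    [InnerProductSpace ℝ E] [NormedAddCommGroup F] [InnerProductSpace ℝ F]
    (f : E →ₗ[ℝ] F) (c : ℝ) (hf : ∀ x, ‖f x‖ = c * ‖x‖) (x y : E) :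
    ⟪f x, f y⟫ = c ^ 2 * ⟪x, y⟫ := by
  rw [real_inner_eq_norm_add_mul_self_sub_norm_mul_self_sub_norm_mul_self_div_two (f x),
    ← map_add, hf, hf, hf,
    real_inner_eq_norm_add_mul_self_sub_norm_mul_self_sub_norm_mul_self_div_two x]
  ring

namespace HType

variable {𝕍 𝕫 : Type*} [NormedAddCommGroup 𝕍] [InnerProductSpace ℝ 𝕍]
  [NormedAddCommGroup 𝕫] [InnerProductSpace ℝ 𝕫] {J : 𝕫 →ₗ[ℝ] 𝕍 →ₗ[ℝ] 𝕍}
  {br : 𝕍 →ₗ[ℝ] 𝕍 →ₗ[ℝ] 𝕫}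

theorem inner_apply_left (hJsq : ∀ (z : 𝕫) (v : 𝕍), J z (J z v) = -(‖z‖ ^ 2) • v)
    (hJnorm : ∀ (z : 𝕫) (v : 𝕍), ‖J z v‖ = ‖z‖ * ‖v‖) (z : 𝕫) (u w : 𝕍) :
    ⟪J z u, w⟫ = -⟪u, J z w⟫ := by
  rcases eq_or_ne z 0 with rfl | hz
  · simp
  have h := inner_map_map_of_norm_map_eq_mul (J z) ‖z‖ (hJnorm z) u (J z w)
  rw [hJsq, inner_smul_right] at h
  have hz2 : ‖z‖ ^ 2 ≠ 0 := by positivity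
  exact mul_left_cancel₀ hz2 (by linarith)

theorem inner_self_apply (hJsq : ∀ (z : 𝕫) (v : 𝕍), J z (J z v) = -(‖z‖ ^ 2) • v)
    (hJnorm : ∀ (z : 𝕫) (v : 𝕍), ‖J z v‖ = ‖z‖ * ‖v‖) (z : 𝕫) (v : 𝕍) :
    ⟪v, J z v⟫ = 0 := by
  have h := inner_apply_left hJsq hJnorm z v v
  rw [real_inner_comm] at h
  linarith

theorem inner_self_apply_apply (hJsq : ∀ (z : 𝕫) (v : 𝕍), J z (J z v) = -(‖z‖ ^ 2) • v)
    (hJnorm : ∀ (z : 𝕫) (v : 𝕍), ‖J z v‖ = ‖z‖ * ‖v‖) (z₁ z₂ : 𝕫) (v : 𝕍) :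
    ⟪v, J z₁ (J z₂ v)⟫ = -(‖v‖ ^ 2 * ⟪z₁, z₂⟫) := by
  have hflip : ∀ z, ‖J.flip v z‖ = ‖v‖ * ‖z‖ := fun z => by
    rw [LinearMap.flip_apply, hJnorm, mul_comm]
  rw [real_inner_comm, inner_apply_left hJsq hJnorm, real_inner_comm]
  exact congrArg Neg.neg (inner_map_map_of_norm_map_eq_mul (J.flip v) ‖v‖ hflip z₁ z₂)

theorem ker_bracket_eq (hbr : ∀ (U V : 𝕍) (Z : 𝕫), ⟪br U V, Z⟫ = ⟪J Z U, V⟫) (v : 𝕍) :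
    LinearMap.ker (br v) = (LinearMap.range (J.flip v))ᗮ := by
  ext w
  rw [LinearMap.mem_ker, Submodule.mem_orthogonal]
  constructor
  · rintro h _ ⟨z, rfl⟩
    rw [LinearMap.flip_apply, ← hbr, h, inner_zero_left]
  · refine fun h => ext_inner_right ℝ fun z => ?_
    rw [hbr, inner_zero_left]
    exact h _ ⟨z, rfl⟩

theorem ker_bracket_inf_orthogonal_eq (hbr : ∀ (U V : 𝕍) (Z : 𝕫), ⟪br U V, Z⟫ = ⟪J Z U, V⟫)
    (v : 𝕍) :
    LinearMap.ker (br v) ⊓ (ℝ ∙ v)ᗮ = ((ℝ ∙ v) ⊔ LinearMap.range (J.flip v))ᗮ := by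
  rw [ker_bracket_eq hbr, inf_comm, Submodule.inf_orthogonal]

theorem apply_mem_orthogonal_of_mem_ker_bracket
    (hJsq : ∀ (z : 𝕫) (v : 𝕍), J z (J z v) = -(‖z‖ ^ 2) • v)
    (hJnorm : ∀ (z : 𝕫) (v : 𝕍), ‖J z v‖ = ‖z‖ * ‖v‖)
    (hbr : ∀ (U V : 𝕍) (Z : 𝕫), ⟪br U V, Z⟫ = ⟪J Z U, V⟫) {v w : 𝕍}
    (hw : w ∈ LinearMap.ker (br v)) (z : 𝕫) : J z w ∈ (ℝ ∙ v)ᗮ := by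
  rw [Submodule.mem_orthogonal_singleton_iff_inner_right, real_inner_comm,
    inner_apply_left hJsq hJnorm, real_inner_comm]
  exact neg_eq_zero.2 ((Submodule.mem_orthogonal _ _).1 ((ker_bracket_eq hbr v).le hw) _ ⟨z, rfl⟩)

theorem forall_apply_mem_ker_bracket_iff [FiniteDimensional ℝ 𝕫]
    (hJsq : ∀ (z : 𝕫) (v : 𝕍), J z (J z v) = -(‖z‖ ^ 2) • v)
    (hJnorm : ∀ (z : 𝕫) (v : 𝕍), ‖J z v‖ = ‖z‖ * ‖v‖)
    (hbr : ∀ (U V : 𝕍) (Z : 𝕫), ⟪br U V, Z⟫ = ⟪J Z U, V⟫) (v : 𝕍) :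
    (∀ (z : 𝕫) (w : 𝕍), w ∈ LinearMap.ker (br v) ⊓ (ℝ ∙ v)ᗮ → J z w ∈ LinearMap.ker (br v)) ↔
      ∀ z₁ z₂ : 𝕫, J z₁ (J z₂ v) ∈ (ℝ ∙ v) ⊔ LinearMap.range (J.flip v) := by
  rw [ker_bracket_inf_orthogonal_eq hbr]
  set S := (ℝ ∙ v) ⊔ LinearMap.range (J.flip v)
  have hswap : ∀ (z z' : 𝕫) (w : 𝕍), ⟪J z' v, J z w⟫ = -⟪w, J z (J z' v)⟫ := fun z z' w => by
    rw [real_inner_comm, inner_apply_left hJsq hJnorm]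
  constructor
  · intro h z₁ z₂
    rw [← S.orthogonal_orthogonal, Submodule.mem_orthogonal]
    intro w hw
    have h₀ := (Submodule.mem_orthogonal _ _).1 ((ker_bracket_eq hbr v).le (h z₁ w hw)) _
      ⟨z₂, rfl⟩
    rw [LinearMap.flip_apply, hswap] at h₀
    linarith
  · intro h z w hw
    rw [ker_bracket_eq hbr, Submodule.mem_orthogonal]
    rintro _ ⟨z', rfl⟩
    rw [LinearMap.flip_apply, hswap,
      (Submodule.mem_orthogonal _ _).1 (S.le_orthogonal_orthogonal (h z z')) w hw, neg_zero]

theorem J_sq_condition_iff (hJsq : ∀ (z : 𝕫) (v : 𝕍), J z (J z v) = -(‖z‖ ^ 2) • v)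
    (hJnorm : ∀ (z : 𝕫) (v : 𝕍), ‖J z v‖ = ‖z‖ * ‖v‖) (v : 𝕍) :
    (∀ z₁ z₂ : 𝕫, ⟪z₁, z₂⟫ = 0 → ∃ z₃ : 𝕫, J z₁ (J z₂ v) = J z₃ v) ↔
      ∀ z₁ z₂ : 𝕫, J z₁ (J z₂ v) ∈ (ℝ ∙ v) ⊔ LinearMap.range (J.flip v) := by
  constructor
  · intro h z₁ z₂
    obtain ⟨_, hp, q, hq, rfl⟩ := (ℝ ∙ z₁).exists_add_mem_mem_orthogonal z₂
    obtain ⟨a, rfl⟩ := Submodule.mem_span_singleton.1 hp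
    obtain ⟨z₃, hz₃⟩ :=
      h z₁ q (Submodule.mem_orthogonal_singleton_iff_inner_right.1 hq)
    rw [map_add, LinearMap.add_apply, map_add, map_smul, LinearMap.smul_apply, map_smul, hJsq,
      hz₃]
    exact add_mem (Submodule.mem_sup_left (Submodule.smul_mem _ _
      (Submodule.smul_mem _ _ (Submodule.mem_span_singleton_self v))))
      (Submodule.mem_sup_right ⟨z₃, rfl⟩)
  · intro h z₁ z₂ hz
    obtain ⟨_, hx, _, ⟨z₃, rfl⟩, hsum⟩ := Submodule.mem_sup.1 (h z₁ z₂)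
    obtain ⟨a, rfl⟩ := Submodule.mem_span_singleton.1 hx
    have hav : a * ‖v‖ ^ 2 = 0 := by
      have h₀ := inner_self_apply_apply hJsq hJnorm z₁ z₂ v
      rw [hz, ← hsum, inner_add_right, real_inner_smul_right, LinearMap.flip_apply,
        inner_self_apply hJsq hJnorm, real_inner_self_eq_norm_sq] at h₀
      linarith
    have hav' : a • v = 0 := by
      rcases mul_eq_zero.1 hav with ha | hv
      · rw [ha, zero_smul]
      · rw [norm_eq_zero.1 (pow_eq_zero_iff two_ne_zero |>.1 hv), smul_zero]
    exact ⟨z₃, by rw [← hsum, hav', zero_add, LinearMap.flip_apply]⟩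

end HType
theorem stmt_5_general
    {𝕍 𝕫 : Type*} [NormedAddCommGroup 𝕍] [InnerProductSpace ℝ 𝕍]
    [NormedAddCommGroup 𝕫] [InnerProductSpace ℝ 𝕫] [FiniteDimensional ℝ 𝕫]
    (J : 𝕫 →ₗ[ℝ] 𝕍 →ₗ[ℝ] 𝕍)
    (hJsq : ∀ (z : 𝕫) (v : 𝕍), J z (J z v) = -(‖z‖ ^ 2) • v)
    (hJnorm : ∀ (z : 𝕫) (v : 𝕍), ‖J z v‖ = ‖z‖ * ‖v‖)
    (br : 𝕍 →ₗ[ℝ] 𝕍 →ₗ[ℝ] 𝕫)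
    (hbr : ∀ (U V : 𝕍) (Z : 𝕫), ⟪br U V, Z⟫ = ⟪J Z U, V⟫)
    (v : 𝕍) :
    List.TFAE
      [ (∀ z₁ z₂ : 𝕫, ⟪z₁, z₂⟫ = 0 → ∃ z₃ : 𝕫, J z₁ (J z₂ v) = J z₃ v),
        (∀ z : 𝕫, Submodule.map (J z) (LinearMap.ker (br v) ⊓ (ℝ ∙ v)ᗮ) ≤
          LinearMap.ker (br v) ⊓ (ℝ ∙ v)ᗮ),
        (∀ (z : 𝕫) (w : 𝕍), w ∈ LinearMap.ker (br v) ⊓ (ℝ ∙ v)ᗮ →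
          J z w ∈ LinearMap.ker (br v)) ] := by
  tfae_have 1 ↔ 3 := (HType.J_sq_condition_iff hJsq hJnorm v).trans
    (HType.forall_apply_mem_ker_bracket_iff hJsq hJnorm hbr v).symm
  tfae_have 2 → 3 := fun h z w hw => (h z (Submodule.mem_map_of_mem hw)).1
  tfae_have 3 → 2 := by
    rintro h z _ ⟨w, hw, rfl⟩
    exact ⟨h z w hw, HType.apply_mem_orthogonal_of_mem_ker_bracket hJsq hJnorm hbr hw.1 z⟩
  tfae_finish

/-- For `v ∈ 𝔳` the following are equivalent: (i) `v` satisfies the `J²`-condition;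
(ii) the subspace `ker_𝔳(ad v) ∩ v^⊥` is invariant under `J_z` for every `z ∈ 𝔷`;
(iii) `J_𝔷(ker_𝔳(ad v) ∩ v^⊥) ⊆ ker_𝔳(ad v)`. Here `ker_𝔳(ad v) = {w : [v,w] = 0}`. -/
theorem stmt_5
    {𝕍 𝕫 : Type*} [NormedAddCommGroup 𝕍] [InnerProductSpace ℝ 𝕍] [FiniteDimensional ℝ 𝕍]
    [NormedAddCommGroup 𝕫] [InnerProductSpace ℝ 𝕫] [FiniteDimensional ℝ 𝕫]
    (J : 𝕫 →ₗ[ℝ] 𝕍 →ₗ[ℝ] 𝕍)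
    (hJsq : ∀ (z : 𝕫) (v : 𝕍), J z (J z v) = -(‖z‖ ^ 2) • v)
    (hJnorm : ∀ (z : 𝕫) (v : 𝕍), ‖J z v‖ = ‖z‖ * ‖v‖)
    (br : 𝕍 →ₗ[ℝ] 𝕍 →ₗ[ℝ] 𝕫)
    (hbr : ∀ (U V : 𝕍) (Z : 𝕫), ⟪br U V, Z⟫ = ⟪J Z U, V⟫)
    (v : 𝕍) :
    List.TFAE
      [ (∀ z₁ z₂ : 𝕫, ⟪z₁, z₂⟫ = 0 → ∃ z₃ : 𝕫, J z₁ (J z₂ v) = J z₃ v),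
        (∀ z : 𝕫, Submodule.map (J z) (LinearMap.ker (br v) ⊓ (ℝ ∙ v)ᗮ) ≤
          LinearMap.ker (br v) ⊓ (ℝ ∙ v)ᗮ),
        (∀ (z : 𝕫) (w : 𝕍), w ∈ LinearMap.ker (br v) ⊓ (ℝ ∙ v)ᗮ →
          J z w ∈ LinearMap.ker (br v)) ] :=
  stmt_5_general J hJsq hJnorm br hbr v
end

section
/- For every p = (V̄, Z̄, t̄) ∈ 𝔳 × 𝔷 × (0,∞), every x₀ = (V₀, Z₀, t₀) ∈ 𝔳 × 𝔷 × ℝ, and every (V, Z, t) ∈ 𝔳 × 𝔷 × (0,∞), one has D_{x₀}(L_p(V, Z, t)) = t̄ · D_{x₀'}(V, Z, t), where x₀' = L_{p⁻¹}(x₀) = ((V₀−V̄)/√t̄, (Z₀−Z̄)/t̄ − (1/(2t̄))·[V̄, V₀], t₀/t̄). In particular, left translations permute the focal varieties: L_p({D_{x₀} = 0}) = {D_{L_p(x₀)} = 0}. -/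
/-!
Since `‖J_Z v‖ = ‖Z‖ ‖v‖`, polarization gives `⟪J_Z u, J_Z v⟫ = ‖Z‖² ⟪u, v⟫`, and with
`J_Z² = -‖Z‖²` this yields `‖Z‖² ⟪J_Z v, v⟫ = ⟪J_Z² v, J_Z v⟫ = -‖Z‖² ⟪J_Z v, v⟫`; hence
`⟪[v, v], Z⟫ = ⟪J_Z v, v⟫ = 0`, i.e. the bracket is alternating. For an alternating bracket,
`L_{p⁻¹}` inverts `L_p`, and `L_p` scales the data entering `D` homogeneously: `V`-differences
by `√t̄`, and `t`-terms and the `Z`-term `Z - Z₀ + ½[V, V₀]` by `t̄`. Thus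
`D_{L_p x₀}(L_p x) = t̄ D_{x₀}(x)`; applying this to `L_{p⁻¹} x₀` gives the identity, and since
`L_p` is a bijection with `t̄ > 0`, it carries `{D_{x₀} = 0}` onto `{D_{L_p x₀} = 0}`.
-/

open RealInnerProductSpace

section

variable {𝕍 𝕫 : Type*} [NormedAddCommGroup 𝕍] [InnerProductSpace ℝ 𝕍] [FiniteDimensional ℝ 𝕍]
  [NormedAddCommGroup 𝕫] [InnerProductSpace ℝ 𝕫] [FiniteDimensional ℝ 𝕫]

/-- The distorted distance function `D_{x₀}(V,Z,t)
  = (1/t)((t + t₀ + ‖(V-V₀)/2‖²)² + ‖Z - Z₀ + ½[V,V₀]‖²)`. -/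
noncomputable def distD (br : 𝕍 →ₗ[ℝ] 𝕍 →ₗ[ℝ] 𝕫) (x₀ x : 𝕍 × 𝕫 × ℝ) : ℝ :=
  (1 / x.2.2) *
    ((x.2.2 + x₀.2.2 + ‖(1 / 2 : ℝ) • (x.1 - x₀.1)‖ ^ 2) ^ 2 +
      ‖x.2.1 - x₀.2.1 + (1 / 2 : ℝ) • br x.1 x₀.1‖ ^ 2)

/-- The left translation by `p = (V̄, Z̄, t̄)`:
`L_p(V,Z,t) = (V̄ + √t̄ V, Z̄ + t̄ Z + ½√t̄ [V̄,V], t̄ t)`. -/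
noncomputable def leftT (br : 𝕍 →ₗ[ℝ] 𝕍 →ₗ[ℝ] 𝕫) (p x : 𝕍 × 𝕫 × ℝ) : 𝕍 × 𝕫 × ℝ :=
  (p.1 + Real.sqrt p.2.2 • x.1,
   p.2.1 + p.2.2 • x.2.1 + ((1 / 2 : ℝ) * Real.sqrt p.2.2) • br p.1 x.1,
   p.2.2 * x.2.2)

end

section

variable {𝕍 𝕫 : Type*} [NormedAddCommGroup 𝕍] [InnerProductSpace ℝ 𝕍]
  [NormedAddCommGroup 𝕫] [InnerProductSpace ℝ 𝕫]

theorem inner_map_map_of_norm_map_eq_mul_s11 (f : 𝕍 →ₗ[ℝ] 𝕫) {c : ℝ}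
    (hf : ∀ v, ‖f v‖ = c * ‖v‖) (u v : 𝕍) : ⟪f u, f v⟫ = c ^ 2 * ⟪u, v⟫ := by
  rw [real_inner_eq_norm_add_mul_self_sub_norm_mul_self_sub_norm_mul_self_div_two,
    real_inner_eq_norm_add_mul_self_sub_norm_mul_self_sub_norm_mul_self_div_two u v,
    ← map_add, hf, hf, hf]
  ring

theorem inner_map_self_eq_zero_of_map_map_eq_neg_smul (f : 𝕍 →ₗ[ℝ] 𝕍) {c : ℝ}
    (hsq : ∀ v, f (f v) = -(c ^ 2) • v) (hf : ∀ v, ‖f v‖ = c * ‖v‖) (v : 𝕍) : ⟪f v, v⟫ = 0 := by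
  rcases eq_or_ne c 0 with rfl | hc
  · simp [norm_eq_zero.1 ((hf v).trans (zero_mul _))]
  · have h := inner_map_map_of_norm_map_eq_mul_s11 f hf (f v) v
    rw [hsq, inner_smul_left, real_inner_comm, RCLike.conj_to_real] at h
    have : 2 * c ^ 2 * ⟪f v, v⟫ = 0 := by linarith
    simpa [hc] using this

theorem isAlt_of_inner_eq_inner_apply (J : 𝕫 →ₗ[ℝ] 𝕍 →ₗ[ℝ] 𝕍) (hJ : ∀ z v, ⟪J z v, v⟫ = 0)
    (br : 𝕍 →ₗ[ℝ] 𝕍 →ₗ[ℝ] 𝕫) (hbr : ∀ U V Z, ⟪br U V, Z⟫ = ⟪J Z U, V⟫) : br.IsAlt :=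
  fun v => ext_inner_right ℝ fun Z => by rw [hbr, hJ, inner_zero_left]

noncomputable def invT (p : 𝕍 × 𝕫 × ℝ) : 𝕍 × 𝕫 × ℝ :=
  (-(Real.sqrt p.2.2)⁻¹ • p.1, -p.2.2⁻¹ • p.2.1, p.2.2⁻¹)

variable (br : 𝕍 →ₗ[ℝ] 𝕍 →ₗ[ℝ] 𝕫) {p : 𝕍 × 𝕫 × ℝ}

theorem leftT_invT_apply (hp : 0 ≤ p.2.2) (x : 𝕍 × 𝕫 × ℝ) :
    leftT br (invT p) x = ((Real.sqrt p.2.2)⁻¹ • (x.1 - p.1),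
      p.2.2⁻¹ • (x.2.1 - p.2.1) - (1 / (2 * p.2.2)) • br p.1 x.1, x.2.2 / p.2.2) := by
  obtain ⟨Vb, Zb, tb⟩ := p
  obtain ⟨s, hs, rfl⟩ : ∃ s, 0 ≤ s ∧ s ^ 2 = tb := ⟨_, Real.sqrt_nonneg tb, Real.sq_sqrt hp⟩
  simp only [leftT, invT, Real.sqrt_inv, Real.sqrt_sq hs, map_smul, LinearMap.smul_apply,
    Prod.mk.injEq]
  refine ⟨?_, ?_, by ring⟩ <;> module

variable {br}

theorem leftT_leftT_invT (hbr : br.IsAlt) (hp : 0 < p.2.2) (x : 𝕍 × 𝕫 × ℝ) :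
    leftT br p (leftT br (invT p) x) = x := by
  rw [leftT_invT_apply br hp.le]
  obtain ⟨Vb, Zb, tb⟩ := p
  obtain ⟨V, Z, t⟩ := x
  obtain ⟨s, hs, rfl⟩ : ∃ s, 0 < s ∧ s ^ 2 = tb := ⟨_, Real.sqrt_pos.2 hp, Real.sq_sqrt hp.le⟩
  simp only [leftT, Real.sqrt_sq hs.le, map_sub, map_smul, hbr.self_eq_zero, Prod.mk.injEq]
  refine ⟨?_, ?_, by field_simp⟩ <;> match_scalars <;> field_simp <;> ring

theorem leftT_invT_leftT (hbr : br.IsAlt) (hp : 0 < p.2.2) (x : 𝕍 × 𝕫 × ℝ) :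
    leftT br (invT p) (leftT br p x) = x := by
  rw [leftT_invT_apply br hp.le]
  obtain ⟨Vb, Zb, tb⟩ := p
  obtain ⟨V, Z, t⟩ := x
  obtain ⟨s, hs, rfl⟩ : ∃ s, 0 < s ∧ s ^ 2 = tb := ⟨_, Real.sqrt_pos.2 hp, Real.sq_sqrt hp.le⟩
  simp only [leftT, Real.sqrt_sq hs.le, map_add, map_smul, hbr.self_eq_zero, Prod.mk.injEq]
  refine ⟨?_, ?_, by field_simp⟩ <;> match_scalars <;> field_simp <;> ring

theorem distD_leftT_leftT (hbr : br.IsAlt) (hp : 0 ≤ p.2.2) (x₀ x : 𝕍 × 𝕫 × ℝ) :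
    distD br (leftT br p x₀) (leftT br p x) = p.2.2 * distD br x₀ x := by
  obtain ⟨Vb, Zb, tb⟩ := p
  obtain ⟨V₀, Z₀, t₀⟩ := x₀
  obtain ⟨V, Z, t⟩ := x
  obtain ⟨s, hs, rfl⟩ : ∃ s, 0 ≤ s ∧ s ^ 2 = tb := ⟨_, Real.sqrt_nonneg tb, Real.sq_sqrt hp⟩
  have hV : Vb + s • V - (Vb + s • V₀) = s • (V - V₀) := by module
  have hZ : Zb + s ^ 2 • Z + ((1 / 2 : ℝ) * s) • br Vb V - (Zb + s ^ 2 • Z₀ +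
      ((1 / 2 : ℝ) * s) • br Vb V₀) + (1 / 2 : ℝ) • br (Vb + s • V) (Vb + s • V₀) =
      s ^ 2 • (Z - Z₀ + (1 / 2 : ℝ) • br V V₀) := by
    simp only [map_add, map_smul, LinearMap.add_apply, LinearMap.smul_apply,
      hbr.self_eq_zero, ← hbr.neg V Vb]
    module
  simp only [distD, leftT, Real.sqrt_sq hs]
  rw [hV, hZ, smul_comm, norm_smul s, norm_smul (s ^ 2), Real.norm_of_nonneg hs,
    Real.norm_of_nonneg (by positivity : (0 : ℝ) ≤ s ^ 2)]
  rcases hs.eq_or_lt with rfl | hs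
  · simp
  · field_simp

end

section

variable {𝕍 𝕫 : Type*} [NormedAddCommGroup 𝕍] [InnerProductSpace ℝ 𝕍] [FiniteDimensional ℝ 𝕍]
  [NormedAddCommGroup 𝕫] [InnerProductSpace ℝ 𝕫] [FiniteDimensional ℝ 𝕫]

/-- `D_{x₀} ∘ L_p = t̄ · D_{L_{p⁻¹}(x₀)}`, where
`L_{p⁻¹}(x₀) = ((V₀-V̄)/√t̄, (Z₀-Z̄)/t̄ - (1/(2t̄))[V̄,V₀], t₀/t̄)`; in particular left
translations permute the focal varieties: `L_p({D_{x₀} = 0}) = {D_{L_p(x₀)} = 0}`. -/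
theorem stmt_11
    (J : 𝕫 →ₗ[ℝ] 𝕍 →ₗ[ℝ] 𝕍)
    (hJsq : ∀ (z : 𝕫) (v : 𝕍), J z (J z v) = -(‖z‖ ^ 2) • v)
    (hJnorm : ∀ (z : 𝕫) (v : 𝕍), ‖J z v‖ = ‖z‖ * ‖v‖)
    (br : 𝕍 →ₗ[ℝ] 𝕍 →ₗ[ℝ] 𝕫)
    (hbr : ∀ (U V : 𝕍) (Z : 𝕫), ⟪br U V, Z⟫ = ⟪J Z U, V⟫)
    (Vb : 𝕍) (Zb : 𝕫) (tb : ℝ) (htb : 0 < tb)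
    (V₀ : 𝕍) (Z₀ : 𝕫) (t₀ : ℝ) :
    leftT br (-(Real.sqrt tb)⁻¹ • Vb, -tb⁻¹ • Zb, tb⁻¹) (V₀, Z₀, t₀) =
      ((Real.sqrt tb)⁻¹ • (V₀ - Vb),
        tb⁻¹ • (Z₀ - Zb) - (1 / (2 * tb)) • br Vb V₀, t₀ / tb) ∧
    (∀ x : 𝕍 × 𝕫 × ℝ, 0 < x.2.2 →
      distD br (V₀, Z₀, t₀) (leftT br (Vb, Zb, tb) x) =
        tb * distD br ((Real.sqrt tb)⁻¹ • (V₀ - Vb),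
          tb⁻¹ • (Z₀ - Zb) - (1 / (2 * tb)) • br Vb V₀, t₀ / tb) x) ∧
    leftT br (Vb, Zb, tb) '' {x : 𝕍 × 𝕫 × ℝ | 0 < x.2.2 ∧ distD br (V₀, Z₀, t₀) x = 0} =
      {x : 𝕍 × 𝕫 × ℝ | 0 < x.2.2 ∧ distD br (leftT br (Vb, Zb, tb) (V₀, Z₀, t₀)) x = 0} := by
  have hbr_alt : br.IsAlt := isAlt_of_inner_eq_inner_apply J
    (fun z => inner_map_self_eq_zero_of_map_map_eq_neg_smul (J z) (hJsq z) (hJnorm z)) br hbr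
  have hinv := leftT_invT_apply br (p := (Vb, Zb, tb)) htb.le (V₀, Z₀, t₀)
  have hscale := distD_leftT_leftT hbr_alt (p := (Vb, Zb, tb)) htb.le
  refine ⟨hinv, fun x _ => ?_, ?_⟩
  · rw [← hinv, ← hscale, leftT_leftT_invT hbr_alt htb]
  · rw [Set.image_eq_preimage_of_inverse (leftT_invT_leftT hbr_alt htb)
      (leftT_leftT_invT hbr_alt htb)]
    ext y
    have hy : distD br (leftT br (Vb, Zb, tb) (V₀, Z₀, t₀)) y =
        tb * distD br (V₀, Z₀, t₀) (leftT br (invT (Vb, Zb, tb)) y) := by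
      rw [← hscale, leftT_leftT_invT hbr_alt htb]
    simp only [Set.mem_preimage, Set.mem_ofPred_eq, hy,
      leftT_invT_apply br (p := (Vb, Zb, tb)) htb.le, div_pos_iff_of_pos_right htb, mul_eq_zero,
      htb.ne', false_or]

end
end

section
/- Let V₀ ∈ 𝔳 and x₀ = (V₀, 0, −1 − ¼‖V₀‖²). The following are equivalent: (i) for every (v, z, s) ∈ 𝔳 × 𝔷 × ℝ with s = ½⟨v, V₀⟩, z = −½[v, V₀] and ‖v‖² + ‖z‖² + s² = 1, and for every θ ∈ (−1, 1), the point γ(θ) = (V(θ), Z(θ), t(θ)) lies on the focal variety F_{x₀}, i.e. t(θ) = 1 − ¼‖V(θ)‖² + ½⟨V(θ), V₀⟩ and Z(θ) = −½[V(θ), V₀]; (ii) V₀ satisfies the J²-condition. (Equivalently: F_{x₀} contains every geodesic starting at e with initial velocity tangent to F_{x₀} if and only if V₀ satisfies the J²-condition.) -/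
open RealInnerProductSpace

/-!
`D(v) := [J_{[v,V₀]} v, V₀] + ⟨v,V₀⟩ [v,V₀]` is a quadratic map `𝔳 → 𝔷`, and both conditions are
equivalent to its vanishing.

Along the geodesic with tangent initial velocity `(v, -½[v,V₀], ½⟨v,V₀⟩)`, the `t`-equation of
the focal variety holds identically, while the `Z`-equation fails exactly by a nonzero multiple
of `D(v)` (for `θ ≠ 0`); since `D` is homogeneous, normalising the velocity costs nothing.

If `V₀` satisfies the `J²`-condition, then for all `w, ζ` one can write
`J_w J_ζ V₀ = J_{z₃} V₀ - ⟨w,ζ⟩ V₀` with `z₃ ⊥ w`; pairing `D(v)` with `ζ` and using this with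
`w = [v,V₀]` gives `D(v) = 0`. Conversely, if `D = 0`, evaluating `D` at `J_a V₀ + ξ` with `ξ`
orthogonal to `R := J_𝔷 V₀` gives `[J_a ξ, V₀] = -⟨ξ,V₀⟩ a`, which shows that `J_{z₁} J_{z₂} V₀`
is orthogonal to `Rᗮ` whenever `z₁ ⊥ z₂`; as `R` is finite-dimensional, `J_{z₁} J_{z₂} V₀ ∈ R`.
-/

theorem inner_map_map_of_norm_map_eq {E F : Type*} [NormedAddCommGroup E] [InnerProductSpace ℝ E]
    [NormedAddCommGroup F] [InnerProductSpace ℝ F] (f : E →ₗ[ℝ] F) {c : ℝ}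
    (hf : ∀ x, ‖f x‖ = c * ‖x‖) (x y : E) : ⟪f x, f y⟫ = c ^ 2 * ⟪x, y⟫ := by
  rw [real_inner_eq_norm_add_mul_self_sub_norm_mul_self_sub_norm_mul_self_div_two,
    real_inner_eq_norm_add_mul_self_sub_norm_mul_self_sub_norm_mul_self_div_two x y, ← map_add,
    hf, hf, hf]
  ring

theorem geodesic_denom_pos {s θ : ℝ} (hs : s ^ 2 ≤ 1) (hθ : θ ∈ Set.Ioo (-1 : ℝ) 1) (r : ℝ) :
    0 < (1 - s * θ) ^ 2 + r ^ 2 * θ ^ 2 := by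
  obtain ⟨hθ₁, hθ₂⟩ := hθ
  have : s * θ < 1 := by nlinarith [sq_nonneg (s - θ), sq_nonneg (s + θ)]
  have : 0 < (1 - s * θ) ^ 2 := by nlinarith
  positivity

section HType

variable {𝕍 𝕫 : Type*} [NormedAddCommGroup 𝕍] [InnerProductSpace ℝ 𝕍]
  [NormedAddCommGroup 𝕫] [InnerProductSpace ℝ 𝕫]
  (J : 𝕫 →ₗ[ℝ] 𝕍 →ₗ[ℝ] 𝕍) (br : 𝕍 →ₗ[ℝ] 𝕍 →ₗ[ℝ] 𝕫)

theorem inner_J_J_right (hJnorm : ∀ (z : 𝕫) (v : 𝕍), ‖J z v‖ = ‖z‖ * ‖v‖) (z : 𝕫) (x y : 𝕍) :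
    ⟪J z x, J z y⟫ = ‖z‖ ^ 2 * ⟪x, y⟫ :=
  inner_map_map_of_norm_map_eq (J z) (hJnorm z) x y

theorem inner_J_J_left (hJnorm : ∀ (z : 𝕫) (v : 𝕍), ‖J z v‖ = ‖z‖ * ‖v‖) (z₁ z₂ : 𝕫) (v : 𝕍) :
    ⟪J z₁ v, J z₂ v⟫ = ‖v‖ ^ 2 * ⟪z₁, z₂⟫ :=
  inner_map_map_of_norm_map_eq (J.flip v) (fun z => by rw [LinearMap.flip_apply, hJnorm, mul_comm])
    z₁ z₂

theorem inner_J_self (hJsq : ∀ (z : 𝕫) (v : 𝕍), J z (J z v) = -(‖z‖ ^ 2) • v)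
    (hJnorm : ∀ (z : 𝕫) (v : 𝕍), ‖J z v‖ = ‖z‖ * ‖v‖) (z : 𝕫) (x : 𝕍) : ⟪J z x, x⟫ = 0 := by
  have h := inner_J_J_right J hJnorm z x (J z x)
  rw [hJsq, real_inner_smul_right, real_inner_comm (J z x) x] at h
  have h' : ‖z‖ ^ 2 * ⟪J z x, x⟫ = 0 := by linarith
  rcases mul_eq_zero.mp h' with hz | hx
  · simp [norm_eq_zero.mp (pow_eq_zero_iff two_ne_zero |>.mp hz)]
  · exact hx

theorem inner_J_left (hJsq : ∀ (z : 𝕫) (v : 𝕍), J z (J z v) = -(‖z‖ ^ 2) • v)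
    (hJnorm : ∀ (z : 𝕫) (v : 𝕍), ‖J z v‖ = ‖z‖ * ‖v‖) (z : 𝕫) (x y : 𝕍) :
    ⟪J z x, y⟫ = -⟪x, J z y⟫ := by
  have h := inner_J_self J hJsq hJnorm z (x + y)
  rw [map_add, inner_add_left, inner_add_right, inner_add_right, inner_J_self J hJsq hJnorm,
    inner_J_self J hJsq hJnorm] at h
  linarith [real_inner_comm (J z y) x]

theorem inner_br (hJsq : ∀ (z : 𝕫) (v : 𝕍), J z (J z v) = -(‖z‖ ^ 2) • v)
    (hJnorm : ∀ (z : 𝕫) (v : 𝕍), ‖J z v‖ = ‖z‖ * ‖v‖)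
    (hbr : ∀ (U V : 𝕍) (Z : 𝕫), ⟪br U V, Z⟫ = ⟪J Z U, V⟫) (U V : 𝕍) (Z : 𝕫) :
    ⟪br U V, Z⟫ = -⟪U, J Z V⟫ := by
  rw [hbr, inner_J_left J hJsq hJnorm]

theorem br_self (hJsq : ∀ (z : 𝕫) (v : 𝕍), J z (J z v) = -(‖z‖ ^ 2) • v)
    (hJnorm : ∀ (z : 𝕫) (v : 𝕍), ‖J z v‖ = ‖z‖ * ‖v‖)
    (hbr : ∀ (U V : 𝕍) (Z : 𝕫), ⟪br U V, Z⟫ = ⟪J Z U, V⟫) (v : 𝕍) : br v v = 0 :=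
  inner_self_eq_zero.mp (by rw [hbr, inner_J_self J hJsq hJnorm])

theorem br_J_self (hJsq : ∀ (z : 𝕫) (v : 𝕍), J z (J z v) = -(‖z‖ ^ 2) • v)
    (hJnorm : ∀ (z : 𝕫) (v : 𝕍), ‖J z v‖ = ‖z‖ * ‖v‖)
    (hbr : ∀ (U V : 𝕍) (Z : 𝕫), ⟪br U V, Z⟫ = ⟪J Z U, V⟫) (a : 𝕫) (W : 𝕍) :
    br (J a W) W = -‖W‖ ^ 2 • a := by
  refine ext_inner_right ℝ fun ζ => ?_
  rw [hbr, inner_J_left J hJsq hJnorm, real_inner_comm, inner_J_J_left J hJnorm,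
    real_inner_smul_left, real_inner_comm a ζ]
  ring

def JSqCondition (V₀ : 𝕍) : Prop :=
  ∀ z₁ z₂ : 𝕫, ⟪z₁, z₂⟫ = 0 → ∃ z₃ : 𝕫, J z₁ (J z₂ V₀) = J z₃ V₀

def bracketDefect (V₀ v : 𝕍) : 𝕫 :=
  br (J (br v V₀) v) V₀ + ⟪v, V₀⟫ • br v V₀

theorem bracketDefect_smul (V₀ v : 𝕍) (c : ℝ) :
    bracketDefect J br V₀ (c • v) = c ^ 2 • bracketDefect J br V₀ v := by
  simp only [bracketDefect, map_smul, LinearMap.smul_apply, real_inner_smul_left, smul_add,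
    smul_smul]
  module

theorem JSqCondition.exists_J_J_eq (hJsq : ∀ (z : 𝕫) (v : 𝕍), J z (J z v) = -(‖z‖ ^ 2) • v)
    (hJnorm : ∀ (z : 𝕫) (v : 𝕍), ‖J z v‖ = ‖z‖ * ‖v‖) {V₀ : 𝕍} (hV₀ : V₀ ≠ 0)
    (h : JSqCondition J V₀) (w ζ : 𝕫) :
    ∃ z₃ : 𝕫, ⟪w, z₃⟫ = 0 ∧ J w (J ζ V₀) = J z₃ V₀ - ⟪w, ζ⟫ • V₀ := by
  rcases eq_or_ne w 0 with rfl | hw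
  · exact ⟨0, by simp⟩
  have hw2 : ‖w‖ ^ 2 ≠ 0 := by positivity
  set c := ⟪w, ζ⟫ / ‖w‖ ^ 2
  have hc : c * ‖w‖ ^ 2 = ⟪w, ζ⟫ := div_mul_cancel₀ _ hw2
  have hperp : ⟪w, ζ - c • w⟫ = 0 := by
    rw [inner_sub_right, real_inner_smul_right, real_inner_self_eq_norm_sq, hc, sub_self]
  obtain ⟨z₃, hz₃⟩ := h w (ζ - c • w) hperp
  refine ⟨z₃, ?_, ?_⟩
  · have : ‖V₀‖ ^ 2 * ⟪w, z₃⟫ = 0 :=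
      calc ‖V₀‖ ^ 2 * ⟪w, z₃⟫ = ⟪J w V₀, J z₃ V₀⟫ := (inner_J_J_left J hJnorm w z₃ V₀).symm
        _ = ‖w‖ ^ 2 * ⟪V₀, J (ζ - c • w) V₀⟫ := by rw [← hz₃, inner_J_J_right J hJnorm]
        _ = 0 := by rw [real_inner_comm, inner_J_self J hJsq hJnorm, mul_zero]
    simpa [hV₀] using this
  · calc J w (J ζ V₀) = J w (J (ζ - c • w) V₀) + c • J w (J w V₀) := by
          simp only [map_sub, map_smul, LinearMap.sub_apply, LinearMap.smul_apply]
          abel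
      _ = J z₃ V₀ - ⟪w, ζ⟫ • V₀ := by
          rw [hz₃, hJsq, smul_smul, mul_neg, hc, neg_smul, ← sub_eq_add_neg]

theorem JSqCondition.bracketDefect_eq_zero
    (hJsq : ∀ (z : 𝕫) (v : 𝕍), J z (J z v) = -(‖z‖ ^ 2) • v)
    (hJnorm : ∀ (z : 𝕫) (v : 𝕍), ‖J z v‖ = ‖z‖ * ‖v‖)
    (hbr : ∀ (U V : 𝕍) (Z : 𝕫), ⟪br U V, Z⟫ = ⟪J Z U, V⟫) {V₀ : 𝕍} (h : JSqCondition J V₀)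
    (v : 𝕍) : bracketDefect J br V₀ v = 0 := by
  rcases eq_or_ne V₀ 0 with rfl | hV₀
  · simp [bracketDefect]
  set w := br v V₀
  refine ext_inner_right ℝ fun ζ => ?_
  obtain ⟨z₃, hwz₃, hJJ⟩ := h.exists_J_J_eq J hJsq hJnorm hV₀ w ζ
  have hvz₃ : ⟪v, J z₃ V₀⟫ = 0 := by rw [← neg_eq_zero, ← inner_br J br hJsq hJnorm hbr, hwz₃]
  calc ⟪bracketDefect J br V₀ v, ζ⟫ = ⟪v, J w (J ζ V₀)⟫ + ⟪v, V₀⟫ * ⟪w, ζ⟫ := by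
        rw [bracketDefect, inner_add_left, real_inner_smul_left, inner_br J br hJsq hJnorm hbr,
          inner_J_left J hJsq hJnorm, neg_neg]
    _ = 0 := by
        rw [hJJ, inner_sub_right, hvz₃, real_inner_smul_right]
        ring
    _ = ⟪0, ζ⟫ := (inner_zero_left ζ).symm

theorem br_eq_zero_of_mem_orthogonal (hJsq : ∀ (z : 𝕫) (v : 𝕍), J z (J z v) = -(‖z‖ ^ 2) • v)
    (hJnorm : ∀ (z : 𝕫) (v : 𝕍), ‖J z v‖ = ‖z‖ * ‖v‖)
    (hbr : ∀ (U V : 𝕍) (Z : 𝕫), ⟪br U V, Z⟫ = ⟪J Z U, V⟫) {V₀ ξ : 𝕍}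
    (hξ : ξ ∈ (LinearMap.range (J.flip V₀))ᗮ) : br ξ V₀ = 0 := by
  refine ext_inner_right ℝ fun ζ => ?_
  have hζ : ⟪J ζ V₀, ξ⟫ = 0 := hξ _ (LinearMap.mem_range_self (J.flip V₀) ζ)
  rw [inner_br J br hJsq hJnorm hbr, real_inner_comm, hζ, neg_zero, inner_zero_left]

theorem br_J_of_mem_orthogonal (hJsq : ∀ (z : 𝕫) (v : 𝕍), J z (J z v) = -(‖z‖ ^ 2) • v)
    (hJnorm : ∀ (z : 𝕫) (v : 𝕍), ‖J z v‖ = ‖z‖ * ‖v‖)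
    (hbr : ∀ (U V : 𝕍) (Z : 𝕫), ⟪br U V, Z⟫ = ⟪J Z U, V⟫) {V₀ : 𝕍} (hV₀ : V₀ ≠ 0)
    (hD : ∀ v, bracketDefect J br V₀ v = 0) (a : 𝕫) {ξ : 𝕍}
    (hξ : ξ ∈ (LinearMap.range (J.flip V₀))ᗮ) : br (J a ξ) V₀ = -⟪ξ, V₀⟫ • a := by
  have hbrv : br (J a V₀ + ξ) V₀ = -‖V₀‖ ^ 2 • a := by
    rw [map_add, LinearMap.add_apply, br_J_self J br hJsq hJnorm hbr,
      br_eq_zero_of_mem_orthogonal J br hJsq hJnorm hbr hξ, add_zero]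
  have hJv : br (J a (J a V₀ + ξ)) V₀ = br (J a ξ) V₀ := by
    rw [map_add, hJsq, map_add, LinearMap.add_apply, map_smul, LinearMap.smul_apply,
      br_self J br hJsq hJnorm hbr, smul_zero, zero_add]
  have hvV : ⟪J a V₀ + ξ, V₀⟫ = ⟪ξ, V₀⟫ := by
    rw [inner_add_left, inner_J_self J hJsq hJnorm, zero_add]
  have key := hD (J a V₀ + ξ)
  rw [bracketDefect, hbrv, hvV, map_smul, LinearMap.smul_apply, map_smul, LinearMap.smul_apply,
    hJv, smul_smul, mul_comm, ← smul_smul, ← smul_add, smul_eq_zero] at key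
  have hV₀2 : -‖V₀‖ ^ 2 ≠ 0 := neg_ne_zero.mpr (by positivity)
  rw [neg_smul]
  exact eq_neg_of_add_eq_zero_left (key.resolve_left hV₀2)

theorem jSqCondition_of_bracketDefect_eq_zero [FiniteDimensional ℝ 𝕫]
    (hJsq : ∀ (z : 𝕫) (v : 𝕍), J z (J z v) = -(‖z‖ ^ 2) • v)
    (hJnorm : ∀ (z : 𝕫) (v : 𝕍), ‖J z v‖ = ‖z‖ * ‖v‖)
    (hbr : ∀ (U V : 𝕍) (Z : 𝕫), ⟪br U V, Z⟫ = ⟪J Z U, V⟫) {V₀ : 𝕍}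
    (hD : ∀ v, bracketDefect J br V₀ v = 0) : JSqCondition J V₀ := by
  intro z₁ z₂ h₁₂
  rcases eq_or_ne V₀ 0 with rfl | hV₀
  · exact ⟨0, by simp⟩
  set R := LinearMap.range (J.flip V₀)
  have hR : J z₁ (J z₂ V₀) ∈ Rᗮᗮ := fun ξ hξ =>
    calc ⟪ξ, J z₁ (J z₂ V₀)⟫ = ⟪br (J z₁ ξ) V₀, z₂⟫ := by
          rw [inner_br J br hJsq hJnorm hbr, inner_J_left J hJsq hJnorm, neg_neg]
      _ = 0 := by
          rw [br_J_of_mem_orthogonal J br hJsq hJnorm hbr hV₀ hD z₁ hξ, real_inner_smul_left,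
            h₁₂, mul_zero]
  rw [R.orthogonal_orthogonal] at hR
  obtain ⟨z₃, hz₃⟩ := hR
  exact ⟨z₃, hz₃.symm⟩

def TangentGeodesicsInFocalVariety (V₀ : 𝕍) : Prop :=
  ∀ (v : 𝕍) (z : 𝕫) (s : ℝ),
    s = (1 / 2) * ⟪v, V₀⟫ → z = -(1 / 2 : ℝ) • br v V₀ →
    ‖v‖ ^ 2 + ‖z‖ ^ 2 + s ^ 2 = 1 →
    ∀ θ ∈ Set.Ioo (-1 : ℝ) 1,
      ∀ χ : ℝ, χ = (1 - s * θ) ^ 2 + ‖z‖ ^ 2 * θ ^ 2 →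
      ∀ Vθ : 𝕍, Vθ = (2 * θ * (1 - s * θ) / χ) • v + (2 * θ ^ 2 / χ) • J z v →
        (1 - θ ^ 2) / χ = 1 - (1 / 4) * ‖Vθ‖ ^ 2 + (1 / 2) * ⟪Vθ, V₀⟫ ∧
        (2 * θ / χ) • z = -(1 / 2 : ℝ) • br Vθ V₀

theorem geodesic_t_eq (hJsq : ∀ (z : 𝕫) (v : 𝕍), J z (J z v) = -(‖z‖ ^ 2) • v)
    (hJnorm : ∀ (z : 𝕫) (v : 𝕍), ‖J z v‖ = ‖z‖ * ‖v‖)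
    (hbr : ∀ (U V : 𝕍) (Z : 𝕫), ⟪br U V, Z⟫ = ⟪J Z U, V⟫) {V₀ v Vθ : 𝕍} {z : 𝕫} {s θ χ : ℝ}
    (hs : s = (1 / 2) * ⟪v, V₀⟫) (hz : z = -(1 / 2 : ℝ) • br v V₀)
    (hnorm : ‖v‖ ^ 2 + ‖z‖ ^ 2 + s ^ 2 = 1) (hχ : χ = (1 - s * θ) ^ 2 + ‖z‖ ^ 2 * θ ^ 2)
    (hχ₀ : χ ≠ 0) (hVθ : Vθ = (2 * θ * (1 - s * θ) / χ) • v + (2 * θ ^ 2 / χ) • J z v) :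
    (1 - θ ^ 2) / χ = 1 - (1 / 4) * ‖Vθ‖ ^ 2 + (1 / 2) * ⟪Vθ, V₀⟫ := by
  have hbrv : br v V₀ = (-2 : ℝ) • z := by rw [hz]; module
  have hvJzv : ⟪v, J z v⟫ = 0 := by rw [real_inner_comm, inner_J_self J hJsq hJnorm]
  have hJzvV : ⟪J z v, V₀⟫ = -2 * ‖z‖ ^ 2 := by
    rw [← hbr, hbrv, real_inner_smul_left, real_inner_self_eq_norm_sq]
  have hVθ_norm : ‖Vθ‖ ^ 2 = (2 * θ * (1 - s * θ) / χ) ^ 2 * ‖v‖ ^ 2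
      + (2 * θ ^ 2 / χ) ^ 2 * (‖z‖ ^ 2 * ‖v‖ ^ 2) := by
    rw [hVθ, norm_add_sq_real, real_inner_smul_left, real_inner_smul_right, hvJzv, norm_smul,
      norm_smul, hJnorm, Real.norm_eq_abs, Real.norm_eq_abs, mul_pow, mul_pow, sq_abs, sq_abs]
    ring
  have hVθ_inner : ⟪Vθ, V₀⟫ = (2 * θ * (1 - s * θ) / χ) * (2 * s)
      + (2 * θ ^ 2 / χ) * (-2 * ‖z‖ ^ 2) := by
    rw [hVθ, inner_add_left, real_inner_smul_left, real_inner_smul_left, hJzvV, hs]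
    ring
  have hv : ‖v‖ ^ 2 = 1 - ‖z‖ ^ 2 - s ^ 2 := by linarith
  rw [hVθ_norm, hVθ_inner, hv]
  field_simp
  rw [hχ]
  ring

theorem geodesic_Z_add_eq {V₀ v Vθ : 𝕍} {z : 𝕫} {s θ χ : ℝ}
    (hs : s = (1 / 2) * ⟪v, V₀⟫) (hz : z = -(1 / 2 : ℝ) • br v V₀)
    (hVθ : Vθ = (2 * θ * (1 - s * θ) / χ) • v + (2 * θ ^ 2 / χ) • J z v) :
    (2 * θ / χ) • z + (1 / 2 : ℝ) • br Vθ V₀ = -(θ ^ 2 / (2 * χ)) • bracketDefect J br V₀ v := by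
  subst hs hz hVθ
  simp only [bracketDefect, map_add, map_smul, LinearMap.add_apply, LinearMap.smul_apply]
  module

theorem tangentGeodesicsInFocalVariety_of_bracketDefect_eq_zero
    (hJsq : ∀ (z : 𝕫) (v : 𝕍), J z (J z v) = -(‖z‖ ^ 2) • v)
    (hJnorm : ∀ (z : 𝕫) (v : 𝕍), ‖J z v‖ = ‖z‖ * ‖v‖)
    (hbr : ∀ (U V : 𝕍) (Z : 𝕫), ⟪br U V, Z⟫ = ⟪J Z U, V⟫) {V₀ : 𝕍}
    (hD : ∀ v, bracketDefect J br V₀ v = 0) : TangentGeodesicsInFocalVariety J br V₀ := by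
  intro v z s hs hz hnorm θ hθ χ hχ Vθ hVθ
  have hs₁ : s ^ 2 ≤ 1 := by nlinarith [sq_nonneg ‖v‖, sq_nonneg ‖z‖]
  have hχ₀ : χ ≠ 0 := hχ ▸ (geodesic_denom_pos hs₁ hθ ‖z‖).ne'
  refine ⟨geodesic_t_eq J br hJsq hJnorm hbr hs hz hnorm hχ hχ₀ hVθ, ?_⟩
  have hZ := geodesic_Z_add_eq J br hs hz hVθ
  rw [hD, smul_zero] at hZ
  rw [neg_smul]
  exact eq_neg_of_add_eq_zero_left hZ

theorem TangentGeodesicsInFocalVariety.bracketDefect_eq_zero_of_normalized {V₀ : 𝕍}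
    (h : TangentGeodesicsInFocalVariety J br V₀) {u : 𝕍}
    (hu : ‖u‖ ^ 2 + ‖-(1 / 2 : ℝ) • br u V₀‖ ^ 2 + ((1 / 2) * ⟪u, V₀⟫) ^ 2 = 1) :
    bracketDefect J br V₀ u = 0 := by
  have hs₁ : ((1 / 2) * ⟪u, V₀⟫) ^ 2 ≤ 1 := by
    nlinarith [sq_nonneg ‖u‖, sq_nonneg ‖-(1 / 2 : ℝ) • br u V₀‖]
  have hθ : (1 / 2 : ℝ) ∈ Set.Ioo (-1 : ℝ) 1 := by norm_num
  set χ := (1 - (1 / 2) * ⟪u, V₀⟫ * (1 / 2)) ^ 2 + ‖-(1 / 2 : ℝ) • br u V₀‖ ^ 2 * (1 / 2) ^ 2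
  have hχ : 0 < χ := geodesic_denom_pos hs₁ hθ _
  have hZ := geodesic_Z_add_eq J br rfl rfl rfl (V₀ := V₀) (v := u) (θ := 1 / 2) (χ := χ)
  rw [(h u _ _ rfl rfl hu _ hθ χ rfl _ rfl).2, neg_smul, neg_add_cancel, eq_comm,
    smul_eq_zero] at hZ
  exact hZ.resolve_left (neg_ne_zero.mpr (by positivity))

theorem TangentGeodesicsInFocalVariety.bracketDefect_eq_zero {V₀ : 𝕍}
    (h : TangentGeodesicsInFocalVariety J br V₀) (v : 𝕍) : bracketDefect J br V₀ v = 0 := by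
  rcases eq_or_ne v 0 with rfl | hv
  · simp [bracketDefect]
  set N : 𝕍 → ℝ := fun u => ‖u‖ ^ 2 + ‖-(1 / 2 : ℝ) • br u V₀‖ ^ 2 + ((1 / 2) * ⟪u, V₀⟫) ^ 2
  have hN : ∀ c : ℝ, N (c • v) = c ^ 2 * N v := fun c => by
    simp only [N, map_smul, LinearMap.smul_apply, norm_smul, real_inner_smul_left,
      mul_pow, Real.norm_eq_abs, sq_abs]
    ring
  have hN₀ : 0 < N v := by
    have := norm_pos_iff.mpr hv
    positivity
  have hc : (√(N v))⁻¹ ≠ 0 := inv_ne_zero (Real.sqrt_pos.mpr hN₀).ne'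
  have hu : N ((√(N v))⁻¹ • v) = 1 := by
    rw [hN, inv_pow, Real.sq_sqrt hN₀.le, inv_mul_cancel₀ hN₀.ne']
  have hD := h.bracketDefect_eq_zero_of_normalized J br hu
  rw [bracketDefect_smul, smul_eq_zero] at hD
  exact hD.resolve_left (pow_ne_zero 2 hc)

end HType

theorem stmt_15_general
    {𝕍 𝕫 : Type*} [NormedAddCommGroup 𝕍] [InnerProductSpace ℝ 𝕍]
    [NormedAddCommGroup 𝕫] [InnerProductSpace ℝ 𝕫] [FiniteDimensional ℝ 𝕫]
    (J : 𝕫 →ₗ[ℝ] 𝕍 →ₗ[ℝ] 𝕍)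
    (hJsq : ∀ (z : 𝕫) (v : 𝕍), J z (J z v) = -(‖z‖ ^ 2) • v)
    (hJnorm : ∀ (z : 𝕫) (v : 𝕍), ‖J z v‖ = ‖z‖ * ‖v‖)
    (br : 𝕍 →ₗ[ℝ] 𝕍 →ₗ[ℝ] 𝕫)
    (hbr : ∀ (U V : 𝕍) (Z : 𝕫), ⟪br U V, Z⟫ = ⟪J Z U, V⟫)
    (V₀ : 𝕍) :
    (∀ (v : 𝕍) (z : 𝕫) (s : ℝ),
        s = (1 / 2) * ⟪v, V₀⟫ → z = -(1 / 2 : ℝ) • br v V₀ →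
        ‖v‖ ^ 2 + ‖z‖ ^ 2 + s ^ 2 = 1 →
        ∀ θ ∈ Set.Ioo (-1 : ℝ) 1,
          ∀ χ : ℝ, χ = (1 - s * θ) ^ 2 + ‖z‖ ^ 2 * θ ^ 2 →
          ∀ Vθ : 𝕍, Vθ = (2 * θ * (1 - s * θ) / χ) • v + (2 * θ ^ 2 / χ) • J z v →
            (1 - θ ^ 2) / χ = 1 - (1 / 4) * ‖Vθ‖ ^ 2 + (1 / 2) * ⟪Vθ, V₀⟫ ∧
            (2 * θ / χ) • z = -(1 / 2 : ℝ) • br Vθ V₀) ↔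
      (∀ z₁ z₂ : 𝕫, ⟪z₁, z₂⟫ = 0 → ∃ z₃ : 𝕫, J z₁ (J z₂ V₀) = J z₃ V₀) := by
  change TangentGeodesicsInFocalVariety J br V₀ ↔ JSqCondition J V₀
  constructor
  · intro h
    exact jSqCondition_of_bracketDefect_eq_zero J br hJsq hJnorm hbr (h.bracketDefect_eq_zero J br)
  · intro h
    exact tangentGeodesicsInFocalVariety_of_bracketDefect_eq_zero J br hJsq hJnorm hbr
      (h.bracketDefect_eq_zero J br hJsq hJnorm hbr)

/-- Let `x₀ = (V₀, 0, -1 - ¼‖V₀‖²)`. The focal variety `F_{x₀}` contains every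
geodesic starting at `e` with initial velocity tangent to `F_{x₀}` — i.e. for every
unit `(v,z,s)` with `s = ½⟨v,V₀⟩`, `z = -½[v,V₀]` and every `θ ∈ (-1,1)` the point
`γ(θ) = (V(θ), Z(θ), t(θ))` satisfies `t(θ) = 1 - ¼‖V(θ)‖² + ½⟨V(θ),V₀⟩` and
`Z(θ) = -½[V(θ),V₀]` — if and only if `V₀` satisfies the `J²`-condition. -/
theorem stmt_15
    {𝕍 𝕫 : Type*} [NormedAddCommGroup 𝕍] [InnerProductSpace ℝ 𝕍] [FiniteDimensional ℝ 𝕍]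
    [NormedAddCommGroup 𝕫] [InnerProductSpace ℝ 𝕫] [FiniteDimensional ℝ 𝕫]
    (J : 𝕫 →ₗ[ℝ] 𝕍 →ₗ[ℝ] 𝕍)
    (hJsq : ∀ (z : 𝕫) (v : 𝕍), J z (J z v) = -(‖z‖ ^ 2) • v)
    (hJnorm : ∀ (z : 𝕫) (v : 𝕍), ‖J z v‖ = ‖z‖ * ‖v‖)
    (br : 𝕍 →ₗ[ℝ] 𝕍 →ₗ[ℝ] 𝕫)
    (hbr : ∀ (U V : 𝕍) (Z : 𝕫), ⟪br U V, Z⟫ = ⟪J Z U, V⟫)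
    (V₀ : 𝕍) :
    (∀ (v : 𝕍) (z : 𝕫) (s : ℝ),
        s = (1 / 2) * ⟪v, V₀⟫ → z = -(1 / 2 : ℝ) • br v V₀ →
        ‖v‖ ^ 2 + ‖z‖ ^ 2 + s ^ 2 = 1 →
        ∀ θ ∈ Set.Ioo (-1 : ℝ) 1,
          ∀ χ : ℝ, χ = (1 - s * θ) ^ 2 + ‖z‖ ^ 2 * θ ^ 2 →
          ∀ Vθ : 𝕍, Vθ = (2 * θ * (1 - s * θ) / χ) • v + (2 * θ ^ 2 / χ) • J z v →
            (1 - θ ^ 2) / χ = 1 - (1 / 4) * ‖Vθ‖ ^ 2 + (1 / 2) * ⟪Vθ, V₀⟫ ∧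
            (2 * θ / χ) • z = -(1 / 2 : ℝ) • br Vθ V₀) ↔
      (∀ z₁ z₂ : 𝕫, ⟪z₁, z₂⟫ = 0 → ∃ z₃ : 𝕫, J z₁ (J z₂ V₀) = J z₃ V₀) :=
  stmt_15_general J hJsq hJnorm br hbr V₀
end
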